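/- arXiv:2601.23055 — 2 statements merged into one kernel-verified Lean document; each statement's English description precedes it below -/
import Mathlib

section
/- Let X be a nonempty compact Hausdorff space and let A be a (closed, unital) subalgebra of C(X, ℂ) that contains the constant functions and separates the points of X. Let x_1, …, x_n be finitely many pairwise distinct points of X and let α_1, …, α_n and β_1, …, β_n be complex coefficients with Σ_j |α_j| ≤ 1, Σ_j |β_j| ≤ 1, and (α_1, …, α_n) ≠ (β_1, …, β_n). Then there exists f ∈ A with Σ_j α_j f(x_j) ≠ Σ_j β_j f(x_j); in other words, A separates the measures μ = Σ_j α_j δ_{x_j} and ν = Σ_j β_j δ_{x_j}. -/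
open Set

/-- Indicator interpolation: a point-separating unital subalgebra contains a function
that is `1` at one chosen point and `0` at finitely many other given points. -/
lemma exists_indicator_mem {X : Type*} [TopologicalSpace X]
    (A : Subalgebra ℂ C(X, ℂ)) (hAsep : A.SeparatesPoints)
    (n : ℕ) (x : Fin n → X) (hx : Function.Injective x) (j0 : Fin n) :
    ∃ f ∈ A, f (x j0) = 1 ∧ ∀ j, j ≠ j0 → f (x j) = 0 := by
  classical
  have key : ∀ j : Fin n, ∃ h : C(X, ℂ), h ∈ A ∧ h (x j0) = 1 ∧ (j ≠ j0 → h (x j) = 0) := by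
    intro j
    by_cases hj : j = j0
    · exact ⟨1, A.one_mem, rfl, fun h => absurd hj h⟩
    · obtain ⟨h, hhA, h1, h2⟩ := hAsep.strongly
        (fun z => if z = x j0 then 1 else 0) (x j0) (x j)
      refine ⟨h, hhA, by simpa using h1, fun _ => ?_⟩
      have hne : x j ≠ x j0 := fun e => hj (hx e)
      simpa [hne] using h2
  choose h hA h1 h0 using key
  refine ⟨∏ j ∈ Finset.univ.erase j0, h j, A.prod_mem fun j _ => hA j, ?_, ?_⟩
  · rw [ContinuousMap.prod_apply]
    exact Finset.prod_eq_one fun j _ => h1 j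
  · intro j hj
    rw [ContinuousMap.prod_apply]
    exact Finset.prod_eq_zero (Finset.mem_erase.2 ⟨hj, Finset.mem_univ j⟩) (h0 j hj)

/-- First assertion of the paper's Lemma 3.2: a closed unital point-separating subalgebra
`A` of `C(X, ℂ)` separates distinct absolutely convex combinations of Dirac functionals
based at the same finite set of (distinct) points. -/
theorem stmt4 (X : Type*) [TopologicalSpace X] [CompactSpace X] [T2Space X] [Nonempty X]
    (A : Subalgebra ℂ C(X, ℂ)) (hAclosed : IsClosed (A : Set C(X, ℂ)))
    (hAsep : A.SeparatesPoints)
    (n : ℕ) (x : Fin n → X) (hx : Function.Injective x)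
    (α β : Fin n → ℂ) (hα : (∑ j, ‖α j‖) ≤ 1) (hβ : (∑ j, ‖β j‖) ≤ 1)
    (hαβ : α ≠ β) :
    ∃ f ∈ A, (∑ j, α j * f (x j)) ≠ (∑ j, β j * f (x j)) := by
  obtain ⟨j0, hj0⟩ := Function.ne_iff.1 hαβ
  obtain ⟨f, hfA, hf1, hf0⟩ := exists_indicator_mem A hAsep n x hx j0
  refine ⟨f, hfA, ?_⟩
  have hsum : ∀ γ : Fin n → ℂ, (∑ j, γ j * f (x j)) = γ j0 := by
    intro γ
    rw [Finset.sum_eq_single j0]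
    · rw [hf1, mul_one]
    · intro j _ hj; rw [hf0 j hj, mul_zero]
    · intro h; exact absurd (Finset.mem_univ j0) h
  rw [hsum α, hsum β]
  exact hj0
end

section
/- Let X be a nonempty compact Hausdorff space and let A be a closed unital subalgebra of C(X, ℂ) that contains the constant functions and separates the points of X. Let T_A ⊆ C(X, ℂ)* denote the set of all finite absolutely convex combinations Σ_j α_j δ_{x_j} of Dirac functionals (x_j ∈ X, Σ_j |α_j| ≤ 1). If μ, ν ∈ T_A satisfy μ(f) = ν(f) for every f ∈ A, then μ = ν; i.e., the canonical quotient map Π : M(X) → M(X)/A^⊥ modulo the annihilator A^⊥ = {φ ∈ M(X) : φ(f) = 0 for all f ∈ A} is injective on T_A. -/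
open Set

/-- The absolutely convex hull of a set `W`: all finite combinations `∑ αⱼ • uⱼ`
with `uⱼ ∈ W` and `∑ |αⱼ| ≤ 1`. -/
def absConvexCombos {B : Type*} [AddCommGroup B] [Module ℂ B] (W : Set B) : Set B :=
  {x | ∃ (n : ℕ) (α : Fin n → ℂ) (u : Fin n → B),
    (∀ i, u i ∈ W) ∧ (∑ i, ‖α i‖) ≤ 1 ∧ x = ∑ i, α i • u i}

/-- The Dirac (evaluation) functional `δ_x : f ↦ f x` in `M(X) = C(X, ℂ)*`. -/
noncomputable def dirac (X : Type*) [TopologicalSpace X] [CompactSpace X] (x : X) :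
    C(X, ℂ) →L[ℂ] ℂ :=
  ContinuousMap.evalCLM ℂ x

/-- The set `T_A` of finite absolutely convex combinations of Dirac functionals. -/
noncomputable def TA (X : Type*) [TopologicalSpace X] [CompactSpace X] :
    Set (C(X, ℂ) →L[ℂ] ℂ) :=
  absConvexCombos (Set.range (dirac X))

lemma key_lemma {X : Type*} [TopologicalSpace X] [CompactSpace X]
    (A : Subalgebra ℂ C(X, ℂ)) (hAsep : A.SeparatesPoints)
    {ι : Type*} [Fintype ι] (z : ι → X) (γ : ι → ℂ)
    (h0 : ∀ f ∈ A, ∑ i, γ i * f (z i) = 0) (f : C(X, ℂ)) :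
    ∑ i, γ i * f (z i) = 0 := by
  classical
  -- point separation inside A
  have sep : ∀ p q : X, p ≠ q → ∃ g : C(X, ℂ), g ∈ A ∧ g p ≠ g q := by
    intro p q hpq
    obtain ⟨F, ⟨g, hg, rfl⟩, hne⟩ := hAsep hpq
    exact ⟨g, hg, hne⟩
  set S : Finset X := Finset.univ.image z with hS
  -- for each p in S, an element of A that is 1 at p and 0 on the rest of S
  have indic : ∀ p ∈ S, ∃ g : C(X, ℂ), g ∈ A ∧ g p = 1 ∧ ∀ q ∈ S, q ≠ p → g q = 0 := by
    intro p _
    have hsel : ∀ q : X, ∃ g : C(X, ℂ), g ∈ A ∧ (p ≠ q → g p ≠ g q) := by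
      intro q
      by_cases hpq : p ≠ q
      · obtain ⟨g, hg, hne⟩ := sep p q hpq
        exact ⟨g, hg, fun _ => hne⟩
      · exact ⟨1, A.one_mem, fun h' => absurd h' hpq⟩
    choose e he hesep using hsel
    refine ⟨∏ q ∈ S.erase p, (e q p - e q q)⁻¹ • (e q - algebraMap ℂ C(X, ℂ) (e q q)),
      ?_, ?_, ?_⟩
    · refine A.prod_mem fun q _ => A.smul_mem (A.sub_mem (he q) (A.algebraMap_mem _)) _
    · rw [ContinuousMap.prod_apply]
      refine Finset.prod_eq_one fun q hq => ?_
      have hpq : p ≠ q := fun h' => (Finset.ne_of_mem_erase hq) h'.symm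
      have hne : e q p - e q q ≠ 0 := sub_ne_zero.mpr (hesep q hpq)
      have halg : ∀ r : X, (algebraMap ℂ C(X, ℂ) (e q q)) r = e q q := fun r => rfl
      simp only [ContinuousMap.smul_apply, ContinuousMap.sub_apply, halg, smul_eq_mul]
      field_simp
    · intro q hq hqp
      rw [ContinuousMap.prod_apply]
      refine Finset.prod_eq_zero (Finset.mem_erase.mpr ⟨hqp, hq⟩) ?_
      simp
  choose! g hgA hg1 hg0 using indic
  -- interpolation: an element of A agreeing with f on S
  set hfun : C(X, ℂ) := ∑ p ∈ S, f p • g p with hhfun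
  have hhA : hfun ∈ A := A.sum_mem fun p hp => A.smul_mem (hgA p hp) _
  have hval : ∀ i, hfun (z i) = f (z i) := by
    intro i
    have hzi : z i ∈ S := Finset.mem_image_of_mem z (Finset.mem_univ i)
    rw [hhfun, ContinuousMap.sum_apply]
    rw [Finset.sum_eq_single (z i)]
    · simp [hg1 _ hzi]
    · intro q hq hqz
      simp [hg0 _ hq _ hzi (fun h' => hqz h'.symm)]
    · intro hni; exact absurd hzi hni
  calc ∑ i, γ i * f (z i) = ∑ i, γ i * hfun (z i) := by simp [hval]
    _ = 0 := h0 hfun hhA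

/-- Second assertion of the paper's Lemma 3.2: if two elements of `T_A` agree on the
closed unital point-separating subalgebra `A`, then they are equal; i.e. the canonical
quotient map modulo the annihilator `A^⊥` is injective on `T_A`. -/
theorem stmt5 (X : Type*) [TopologicalSpace X] [CompactSpace X] [T2Space X] [Nonempty X]
    (A : Subalgebra ℂ C(X, ℂ)) (hAclosed : IsClosed (A : Set C(X, ℂ)))
    (hAsep : A.SeparatesPoints)
    (μ ν : C(X, ℂ) →L[ℂ] ℂ) (hμ : μ ∈ TA X) (hν : ν ∈ TA X)
    (h : ∀ f ∈ A, μ f = ν f) :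
    μ = ν := by
  classical
  obtain ⟨n, α, u, hu, -, hμeq⟩ := hμ
  obtain ⟨m, β, v, hv, -, hνeq⟩ := hν
  choose x hx using hu
  choose y hy using hv
  have hμf : ∀ f : C(X, ℂ), μ f = ∑ i, α i * f (x i) := by
    intro f
    rw [hμeq]
    simp [ContinuousLinearMap.sum_apply, ← hx, dirac, ContinuousMap.evalCLM]
  have hνf : ∀ f : C(X, ℂ), ν f = ∑ j, β j * f (y j) := by
    intro f
    rw [hνeq]
    simp [ContinuousLinearMap.sum_apply, ← hy, dirac, ContinuousMap.evalCLM]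
  have key := key_lemma A hAsep (Sum.elim x y) (Sum.elim α (-β))
  have hsum : ∀ f : C(X, ℂ),
      ∑ i : Fin n ⊕ Fin m, Sum.elim α (-β) i * f (Sum.elim x y i) = μ f - ν f := by
    intro f
    rw [Fintype.sum_sum_type, hμf, hνf]
    simp [sub_eq_add_neg, Finset.sum_neg_distrib, neg_mul]
  have h0 : ∀ f ∈ A, ∑ i : Fin n ⊕ Fin m,
      Sum.elim α (-β) i * f (Sum.elim x y i) = 0 := by
    intro f hf
    rw [hsum f, h f hf, sub_self]
  ext f
  have := key h0 f
  rw [hsum f] at this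
  exact sub_eq_zero.mp this
end
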